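/- arXiv:1607.04619 — 3 statements merged into one kernel-verified Lean document; each statement's English description precedes it below -/
import Mathlib

section
/- Let X and Y be real Banach spaces, let F : X → Y be Fréchet differentiable at every point with derivative F'(x) ∈ B(X,Y) at x, and let û ∈ X. Suppose there exist constants δ ≥ 0, K > 0 and a function g : [0,∞) → [0,∞) such that: (i) ‖F(û)‖_Y ≤ δ; (ii) F'(û) : X → Y is bijective and ‖u‖_X ≤ K‖F'(û)u‖_Y for all u ∈ X; (iii) ‖F'(û+u) − F'(û)‖_{B(X,Y)} ≤ g(‖u‖_X) for all u ∈ X; (iv) g is nondecreasing and g(t) → 0 as t → 0⁺. If moreover there exists α > 0 with δ ≤ α/K − G(α) and K·g(α) < 1, where G(t) := ∫₀ᵗ g(s) ds, then there exists a solution u ∈ X of F(u) = 0 with ‖u − û‖_X ≤ α, and this solution is unique among all u with ‖u − û‖_X ≤ α. -/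
open Filter Topology MeasureTheory intervalIntegral

/-!
With `L = F'(û)`, the zeros of `F` near `û` are the fixed points `û + u` of the simplified Newton
map `Φ u = u - L⁻¹ F(û + u) = -L⁻¹ (F(û) + R u)`, where `R u = F(û + u) - F(û) - L u` has
derivative `F'(û + u) - L`, of norm at most `g ‖u‖`. Integrating along the segment from `0` to
`u` gives `‖R u‖ ≤ G ‖u‖`, so `‖Φ u‖ ≤ K (δ + G α) ≤ α` on the closed `α`-ball, and the mean
value inequality makes `Φ` a `K g(α)`-contraction there. Banach's fixed point theorem concludes.
-/

theorem norm_sub_le_integral_of_norm_fderiv_le {E F : Type*} [NormedAddCommGroup E]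
    [NormedSpace ℝ E] [NormedAddCommGroup F] [NormedSpace ℝ F] {f : E → F}
    {f' : E → E →L[ℝ] F} {ψ : ℝ → ℝ} (hf : ∀ x, HasFDerivAt f (f' x) x)
    (hψ : MonotoneOn ψ (Set.Ici 0)) (hf' : ∀ x, ‖f' x‖ ≤ ψ ‖x‖) (u : E) :
    ‖f u - f 0‖ ≤ ∫ s in (0 : ℝ)..‖u‖, ψ s := by
  have hγ : ∀ t : ℝ, HasDerivAt (fun t : ℝ => f (t • u)) (f' (t • u) u) t := fun t =>
    (hf (t • u)).comp_hasDerivAt t ((hasDerivAt_id t).smul_const u) |>.congr_deriv (by simp)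
  have hbound : ∀ t ∈ Set.Ioo (0 : ℝ) 1,
      ‖deriv (fun t : ℝ => f (t • u)) t‖ ≤ ψ (‖u‖ * t) * ‖u‖ := by
    intro t ht
    rw [(hγ t).deriv]
    calc ‖f' (t • u) u‖ ≤ ψ ‖t • u‖ * ‖u‖ := (f' _).le_of_opNorm_le (hf' _) u
      _ = ψ (‖u‖ * t) * ‖u‖ := by
        rw [norm_smul, Real.norm_of_nonneg ht.1.le, mul_comm t]
  have hint : IntervalIntegrable (fun t => ψ (‖u‖ * t) * ‖u‖) volume 0 1 := by
    refine (MonotoneOn.intervalIntegrable ?_).mul_const _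
    intro s hs t ht hst
    rw [Set.uIcc_of_le zero_le_one] at hs ht
    exact hψ (mul_nonneg (norm_nonneg u) hs.1) (mul_nonneg (norm_nonneg u) ht.1) (by gcongr)
  calc ‖f u - f 0‖ = ‖f ((1 : ℝ) • u) - f ((0 : ℝ) • u)‖ := by simp
    _ ≤ ∫ t in (0 : ℝ)..1, ψ (‖u‖ * t) * ‖u‖ :=
      norm_sub_le_integral_of_norm_deriv_le_of_le zero_le_one
        (fun t _ => (hγ t).continuousAt.continuousWithinAt)
        (fun t _ => (hγ t).differentiableAt.differentiableWithinAt)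
        (ae_of_all _ hbound) hint
    _ = ∫ s in (0 : ℝ)..‖u‖, ψ s := by
      rw [intervalIntegral.integral_mul_const, mul_comm, ← smul_eq_mul,
        smul_integral_comp_mul_left]
      simp

theorem existsUnique_isFixedPt_of_dist_le_mul {M : Type*} [MetricSpace M] {f : M → M}
    {s : Set M} {c : ℝ} {x : M} (hs : IsComplete s) (hx : x ∈ s) (hmaps : Set.MapsTo f s s)
    (hf : ∀ y ∈ s, ∀ z ∈ s, dist (f y) (f z) ≤ c * dist y z) (hc : c < 1) :
    ∃! y, Function.IsFixedPt f y ∧ y ∈ s := by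
  have hlip : LipschitzOnWith c.toNNReal f s := .of_dist_le_mul fun y hy z hz =>
    (hf y hy z hz).trans (by rw [Real.coe_toNNReal']; gcongr; exact le_max_left _ _)
  obtain ⟨y, hys, hy, -⟩ := ContractingWith.exists_fixedPoint' hs hmaps
    ⟨by simpa using hc, hlip.to_restrict⟩ hx (edist_ne_top _ _)
  refine ⟨y, ⟨hy, hys⟩, fun z ⟨hz, hzs⟩ => dist_le_zero.1 ?_⟩
  have h := hf z hzs y hys
  rw [hz.eq, hy.eq] at h
  nlinarith [dist_nonneg (x := z) (y := y)]

section Remainder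

variable {X Y : Type*} [NormedAddCommGroup X] [NormedSpace ℝ X] [NormedAddCommGroup Y]
  [NormedSpace ℝ Y] {F : X → Y} {F' : X → X →L[ℝ] Y} {uhat : X} {g : ℝ → ℝ}

theorem hasFDerivAt_remainder (hF : ∀ x, HasFDerivAt F (F' x) x) (u : X) :
    HasFDerivAt (fun v => F (uhat + v) - F' uhat v) (F' (uhat + u) - F' uhat) u :=
  ((hF (uhat + u)).comp u ((hasFDerivAt_id u).const_add uhat)).sub (F' uhat).hasFDerivAt

theorem norm_remainder_le (hF : ∀ x, HasFDerivAt F (F' x) x) (hg : MonotoneOn g (Set.Ici 0))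
    (hlip : ∀ u, ‖F' (uhat + u) - F' uhat‖ ≤ g ‖u‖) (u : X) :
    ‖F (uhat + u) - F uhat - F' uhat u‖ ≤ ∫ s in (0 : ℝ)..‖u‖, g s := by
  simpa [sub_right_comm] using
    norm_sub_le_integral_of_norm_fderiv_le (hasFDerivAt_remainder hF) hg hlip u

theorem norm_remainder_sub_remainder_le (hF : ∀ x, HasFDerivAt F (F' x) x)
    (hg : MonotoneOn g (Set.Ici 0)) (hlip : ∀ u, ‖F' (uhat + u) - F' uhat‖ ≤ g ‖u‖) {r : ℝ}
    {u v : X} (hu : ‖u‖ ≤ r) (hv : ‖v‖ ≤ r) :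
    ‖(F (uhat + u) - F' uhat u) - (F (uhat + v) - F' uhat v)‖ ≤ g r * ‖u - v‖ := by
  refine (convex_closedBall (0 : X) r).norm_image_sub_le_of_norm_hasFDerivWithin_le
    (fun w _ => (hasFDerivAt_remainder hF w).hasFDerivWithinAt) (fun w hw => ?_)
    (by simpa using hv) (by simpa using hu)
  rw [mem_closedBall_zero_iff] at hw
  exact (hlip w).trans (hg (norm_nonneg w) ((norm_nonneg w).trans hw) hw)

end Remainder

section NewtonMap

variable {X Y : Type*} [NormedAddCommGroup X] [NormedSpace ℝ X] [NormedAddCommGroup Y]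
  [NormedSpace ℝ Y] {F : X → Y} {L : X ≃L[ℝ] Y} {uhat : X} {K : ℝ}

def newtonMap (F : X → Y) (L : X ≃L[ℝ] Y) (uhat u : X) : X :=
  u - L.symm (F (uhat + u))

theorem newtonMap_eq_self_iff {u : X} : newtonMap F L uhat u = u ↔ F (uhat + u) = 0 := by
  simp [newtonMap]

theorem newtonMap_eq (u : X) :
    newtonMap F L uhat u = -L.symm (F uhat + (F (uhat + u) - F uhat - L u)) := by
  simp only [newtonMap, map_add, map_sub, L.symm_apply_apply]
  abel

theorem norm_newtonMap_le (hK : 0 ≤ K) (hL : ∀ y, ‖L.symm y‖ ≤ K * ‖y‖) (u : X) :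
    ‖newtonMap F L uhat u‖ ≤ K * (‖F uhat‖ + ‖F (uhat + u) - F uhat - L u‖) := by
  rw [newtonMap_eq, norm_neg]
  exact (hL _).trans (mul_le_mul_of_nonneg_left (norm_add_le _ _) hK)

theorem norm_newtonMap_sub_le (hL : ∀ y, ‖L.symm y‖ ≤ K * ‖y‖) (u v : X) :
    ‖newtonMap F L uhat u - newtonMap F L uhat v‖ ≤
      K * ‖(F (uhat + u) - L u) - (F (uhat + v) - L v)‖ := by
  convert hL ((F (uhat + v) - L v) - (F (uhat + u) - L u)) using 2
  · simp only [newtonMap, map_sub, L.symm_apply_apply]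
    abel
  · rw [norm_sub_rev]

theorem mapsTo_newtonMap_closedBall (hK : 0 ≤ K) (hL : ∀ y, ‖L.symm y‖ ≤ K * ‖y‖) {α β : ℝ}
    (hR : ∀ u : X, ‖u‖ ≤ α → ‖F (uhat + u) - F uhat - L u‖ ≤ β) (hβ : K * (‖F uhat‖ + β) ≤ α) :
    Set.MapsTo (newtonMap F L uhat) (Metric.closedBall 0 α) (Metric.closedBall 0 α) := by
  intro u hu
  rw [mem_closedBall_zero_iff] at hu ⊢
  exact (norm_newtonMap_le hK hL u).trans <|
    (mul_le_mul_of_nonneg_left (by gcongr; exact hR u hu) hK).trans hβ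

end NewtonMap

theorem stmt_0_general
    {X Y : Type*} [NormedAddCommGroup X] [NormedSpace ℝ X] [CompleteSpace X]
    [NormedAddCommGroup Y] [NormedSpace ℝ Y] [CompleteSpace Y]
    (F : X → Y) (F' : X → X →L[ℝ] Y)
    (hF : ∀ x : X, HasFDerivAt F (F' x) x)
    (uhat : X) (δ K : ℝ) (g : ℝ → ℝ)
    (hK : 0 < K)
    (hg_nonneg : ∀ t : ℝ, 0 ≤ t → 0 ≤ g t)
    (hg_mono : ∀ s t : ℝ, 0 ≤ s → s ≤ t → g s ≤ g t)
    (hres : ‖F uhat‖ ≤ δ)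
    (hbij : Function.Bijective (F' uhat))
    (hinv : ∀ u : X, ‖u‖ ≤ K * ‖(F' uhat) u‖)
    (hlip : ∀ u : X, ‖F' (uhat + u) - F' uhat‖ ≤ g ‖u‖)
    (α : ℝ) (hα : 0 < α)
    (h1 : δ ≤ α / K - ∫ s in (0:ℝ)..α, g s)
    (h2 : K * g α < 1) :
    ∃! u : X, F u = 0 ∧ ‖u - uhat‖ ≤ α := by
  set L := ContinuousLinearEquiv.ofBijective (F' uhat) (LinearMap.ker_eq_bot.2 hbij.1)
    (LinearMap.range_eq_top.2 hbij.2)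
  have hL (y : Y) : ‖L.symm y‖ ≤ K * ‖y‖ := by
    have h := hinv (L.symm y)
    rwa [show F' uhat (L.symm y) = y from L.apply_symm_apply y] at h
  have hg : MonotoneOn g (Set.Ici 0) := fun s hs t _ hst => hg_mono s t hs hst
  have hG (u : X) (hu : ‖u‖ ≤ α) :
      ‖F (uhat + u) - F uhat - L u‖ ≤ ∫ s in (0 : ℝ)..α, g s :=
    (norm_remainder_le hF hg hlip u).trans <| integral_mono_interval le_rfl (norm_nonneg u) hu
      (ae_restrict_of_forall_mem measurableSet_Ioc fun s hs => hg_nonneg s hs.1.le)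
      (hg.mono (Set.uIcc_of_le hα.le ▸ Set.Icc_subset_Ici_self)).intervalIntegrable
  have hmaps : Set.MapsTo (newtonMap F L uhat) (Metric.closedBall 0 α) (Metric.closedBall 0 α) :=
    mapsTo_newtonMap_closedBall hK.le hL hG <| by
      rw [le_sub_iff_add_le', le_div_iff₀' hK] at h1; nlinarith
  have hcontr (u) (hu : u ∈ Metric.closedBall 0 α) (v) (hv : v ∈ Metric.closedBall 0 α) :
      dist (newtonMap F L uhat u) (newtonMap F L uhat v) ≤ K * g α * dist u v := by
    rw [mem_closedBall_zero_iff] at hu hv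
    rw [dist_eq_norm, dist_eq_norm, mul_assoc]
    exact (norm_newtonMap_sub_le hL u v).trans <| mul_le_mul_of_nonneg_left
      (norm_remainder_sub_remainder_le hF hg hlip hu hv) hK.le
  obtain ⟨u, ⟨hfix, hu⟩, huniq⟩ := existsUnique_isFixedPt_of_dist_le_mul
    Metric.isClosed_closedBall.isComplete (Metric.mem_closedBall_self hα.le) hmaps hcontr h2
  refine ⟨uhat + u, ⟨newtonMap_eq_self_iff.1 hfix, by simpa using hu⟩, fun v ⟨hv, hvα⟩ => ?_⟩
  have := huniq (v - uhat) ⟨newtonMap_eq_self_iff.2 (by simpa using hv), by simpa using hvα⟩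
  rw [← this, add_sub_cancel]

/-- Plum's verification theorem: existence and local uniqueness of a zero of a
Fréchet differentiable map between Banach spaces near an approximate solution. -/
theorem stmt_0
    {X Y : Type*} [NormedAddCommGroup X] [NormedSpace ℝ X] [CompleteSpace X]
    [NormedAddCommGroup Y] [NormedSpace ℝ Y] [CompleteSpace Y]
    (F : X → Y) (F' : X → X →L[ℝ] Y)
    (hF : ∀ x : X, HasFDerivAt F (F' x) x)
    (uhat : X) (δ K : ℝ) (g : ℝ → ℝ)
    (hδ : 0 ≤ δ) (hK : 0 < K)
    (hg_nonneg : ∀ t : ℝ, 0 ≤ t → 0 ≤ g t)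
    (hg_mono : ∀ s t : ℝ, 0 ≤ s → s ≤ t → g s ≤ g t)
    (hg_lim : Tendsto g (𝓝[>] (0:ℝ)) (𝓝 0))
    (hres : ‖F uhat‖ ≤ δ)
    (hbij : Function.Bijective (F' uhat))
    (hinv : ∀ u : X, ‖u‖ ≤ K * ‖(F' uhat) u‖)
    (hlip : ∀ u : X, ‖F' (uhat + u) - F' uhat‖ ≤ g ‖u‖)
    (α : ℝ) (hα : 0 < α)
    (h1 : δ ≤ α / K - ∫ s in (0:ℝ)..α, g s)
    (h2 : K * g α < 1) :
    ∃! u : X, F u = 0 ∧ ‖u - uhat‖ ≤ α :=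
  stmt_0_general F F' hF uhat δ K g hK hg_nonneg hg_mono hres hbij hinv hlip α hα h1 h2
end

section
/- Let H be a real Hilbert space and let N : H → H be a compact self-adjoint bounded linear operator; set A := I − N, where I is the identity operator. Suppose μ₀ > 0 satisfies μ₀ ≤ 1 and μ₀ ≤ |μ| for every eigenvalue μ of A. Then A is bijective and μ₀‖u‖ ≤ ‖Au‖ for all u ∈ H; in particular A has a bounded inverse A⁻¹ : H → H with operator norm ‖A⁻¹‖ ≤ μ₀⁻¹. -/
open RealInnerProductSpace

/-!
By the Fredholm alternative every spectral value `μ ≠ 1` of `A = 1 - N` is an eigenvalue, so the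
whole spectrum of `A` lies in `{|μ| ≥ μ₀}`; in particular `0 ∉ σ(A)` and `A` is invertible. The
inverse is self-adjoint, so its norm equals its spectral radius, which is at most `μ₀⁻¹`.
-/

namespace IsCompactOperator

variable {𝕜 X : Type*} [NontriviallyNormedField 𝕜] [NormedAddCommGroup X] [NormedSpace 𝕜 X]
  [CompleteSpace X] {N : X →L[𝕜] X}

theorem exists_eigenvector_one_sub_of_mem_spectrum (hN : IsCompactOperator N) {μ : 𝕜}
    (hμ : μ ≠ 1) (h : μ ∈ spectrum 𝕜 (1 - N)) : ∃ u : X, u ≠ 0 ∧ (1 - N) u = μ • u := by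
  have h1 : 1 - μ ∈ spectrum 𝕜 N := by
    rw [← map_one (algebraMap 𝕜 (X →L[𝕜] X)), ← spectrum.singleton_sub_eq] at h
    obtain ⟨_, rfl, ν, hν, rfl⟩ := h
    simpa using hν
  obtain ⟨u, hu⟩ :=
    ((hN.hasEigenvalue_iff_mem_spectrum (sub_ne_zero.2 hμ.symm)).2 h1).exists_hasEigenvector
  refine ⟨u, hu.2, ?_⟩
  have := hu.apply_eq_smul
  simp only [ContinuousLinearMap.coe_coe] at this
  simp [this, sub_smul]

end IsCompactOperator

section

variable {𝕜 E : Type*} [RCLike 𝕜] [NormedAddCommGroup E] [InnerProductSpace 𝕜 E] [CompleteSpace E]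

theorem IsSelfAdjoint.norm_inv_le_of_forall_le_norm {A : (E →L[𝕜] E)ˣ}
    (hA : IsSelfAdjoint (A : E →L[𝕜] E)) {c : ℝ} (hc : 0 < c)
    (h : ∀ μ ∈ spectrum 𝕜 (A : E →L[𝕜] E), c ≤ ‖μ‖) : ‖(↑A⁻¹ : E →L[𝕜] E)‖ ≤ c⁻¹ := by
  have hA' : IsSelfAdjoint A := Units.ext hA.star_eq
  have hinv : IsSelfAdjoint (↑A⁻¹ : E →L[𝕜] E) := congrArg Units.val hA'.inv
  have hrad : spectralRadius 𝕜 (↑A⁻¹ : E →L[𝕜] E) ≤ ENNReal.ofReal c⁻¹ := by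
    refine iSup₂_le fun k hk => ?_
    rw [← spectrum.map_inv] at hk
    have := h k⁻¹ hk
    rw [norm_inv] at this
    have hk0 : 0 < ‖k‖ := inv_pos.1 (hc.trans_le this)
    rw [← ENNReal.ofReal_coe_nnreal, coe_nnnorm]
    exact ENNReal.ofReal_le_ofReal ((le_inv_comm₀ hc hk0).1 this)
  rw [ContinuousLinearMap.spectralRadius_eq_nnnorm _ hinv, ← ENNReal.ofReal_coe_nnreal, coe_nnnorm,
    ENNReal.ofReal_le_ofReal_iff (by positivity)] at hrad
  exact hrad

end

/-- If `N` is a compact self-adjoint operator on a real Hilbert space, `A = I - N`,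
and `0 < μ₀ ≤ 1` is a lower bound for `|μ|` over all eigenvalues `μ` of `A`, then `A`
is bijective, `μ₀‖u‖ ≤ ‖Au‖` for all `u`, and `A` has a bounded inverse with norm `≤ μ₀⁻¹`. -/
theorem stmt_1 {H : Type*} [NormedAddCommGroup H] [InnerProductSpace ℝ H] [CompleteSpace H]
    (N : H →L[ℝ] H) (hcompact : IsCompactOperator N)
    (hsa : ∀ u v : H, ⟪N u, v⟫ = ⟪u, N v⟫)
    (A : H →L[ℝ] H) (hA : A = 1 - N)
    (μ₀ : ℝ) (hμ₀pos : 0 < μ₀) (hμ₀le : μ₀ ≤ 1)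
    (heig : ∀ μ : ℝ, (∃ u : H, u ≠ 0 ∧ A u = μ • u) → μ₀ ≤ |μ|) :
    Function.Bijective A ∧ (∀ u : H, μ₀ * ‖u‖ ≤ ‖A u‖) ∧
      ∃ B : H →L[ℝ] H, (∀ u : H, B (A u) = u) ∧ (∀ u : H, A (B u) = u) ∧ ‖B‖ ≤ μ₀⁻¹ := by
  have hAsa : IsSelfAdjoint A :=
    hA ▸ (IsSelfAdjoint.one _).sub (N.isSelfAdjoint_iff_isSymmetric.2 hsa)
  have hspec : ∀ μ ∈ spectrum ℝ A, μ₀ ≤ ‖μ‖ := by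
    intro μ hμ
    rcases eq_or_ne μ 1 with rfl | hμ1
    · simpa using hμ₀le
    · subst hA
      exact heig μ (hcompact.exists_eigenvector_one_sub_of_mem_spectrum hμ1 hμ)
  obtain ⟨U, hU⟩ : IsUnit A :=
    spectrum.isUnit_of_zero_notMem ℝ fun h0 => by simpa [hμ₀pos.not_ge] using hspec 0 h0
  have hB : ‖(↑U⁻¹ : H →L[ℝ] H)‖ ≤ μ₀⁻¹ :=
    (hU ▸ hAsa).norm_inv_le_of_forall_le_norm hμ₀pos (hU ▸ hspec)
  have hleft : ∀ u : H, (↑U⁻¹ : H →L[ℝ] H) (A u) = u := fun u => by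
    rw [← hU]; exact congr($(U.inv_mul) u)
  have hright : ∀ u : H, A ((↑U⁻¹ : H →L[ℝ] H) u) = u := fun u => by
    rw [← hU]; exact congr($(U.mul_inv) u)
  refine ⟨ContinuousLinearMap.isUnit_iff_bijective.1 (hU ▸ U.isUnit), fun u => ?_,
    ↑U⁻¹, hleft, hright, hB⟩
  calc μ₀ * ‖u‖ = μ₀ * ‖(↑U⁻¹ : H →L[ℝ] H) (A u)‖ := by rw [hleft]
    _ ≤ μ₀ * (μ₀⁻¹ * ‖A u‖) := by gcongr; exact (↑U⁻¹ : H →L[ℝ] H).le_of_opNorm_le hB _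
    _ = ‖A u‖ := by field_simp
end

section
/- Let (Ω, μ) be a measure space, let 1 < p < 2 and set p' := 2(p−1). Let q, r be real numbers with q ≥ 2, r ≥ 1/(p−1) and 2/q + 1/r = 1. Let û, ω : Ω → ℝ be measurable with ω ∈ L^q(μ) ∩ L^{rp'}(μ) and û ∈ L^{rp'}(μ), and let ε > 0. Then ‖ |û+εω|^{p-1}(û+εω) − |û|^{p-1}û ‖_{L²(μ)} ≤ max(1, 2^{(p'−1)/2}) · p · ε · ‖ω‖_{L^q(μ)} · ( ‖û‖_{L^{rp'}(μ)}^{p'} + (ε^{p'}/(p'+1)) · ‖ω‖_{L^{rp'}(μ)}^{p'} )^{1/2}. -/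
/-!
Write `F t = |t| ^ (p - 1) * t` and `p' = 2 (p - 1)`. Since `F' = p |t| ^ (p - 1)`, we have
`F (a + c) - F a = p c ∫₀¹ |a + s c| ^ (p - 1) ds`; Jensen's inequality on `[0, 1]` bounds
its square by `p² c² ∫₀¹ |a + s c| ^ p' ds`, and
`(x + y) ^ p' ≤ max 1 (2 ^ (p' - 1)) (x ^ p' + y ^ p')` integrates this to
`max 1 (2 ^ (p' - 1)) p² c² (|a| ^ p' + |c| ^ p' / (p' + 1))`.
Taking `c = ε ω` pointwise, Hölder's inequality with `1/2 = 1/q + 1/(2r)` splits off `‖ω‖_q`,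
and `‖(|û| ^ p' + …) ^ (1/2)‖_{2r} = ‖|û| ^ p' + …‖_r ^ (1/2)` is bounded by Minkowski's
inequality in `L^r`, which applies because `r ≥ 1 / (p - 1) > 1`.
-/

open MeasureTheory Set Filter Topology
open scoped NNReal

lemma hasDerivAt_abs_rpow_sub_one_mul_self {p : ℝ} (hp : 1 < p) (t : ℝ) :
    HasDerivAt (fun s : ℝ => |s| ^ (p - 1) * s) (p * |t| ^ (p - 1)) t := by
  have hp0 : 0 < p - 1 := by linarith
  rcases eq_or_ne t 0 with rfl | ht
  · rw [abs_zero, Real.zero_rpow hp0.ne', mul_zero, hasDerivAt_iff_tendsto_slope]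
    have hlim : Tendsto (fun s : ℝ => |s| ^ (p - 1)) (𝓝[≠] 0) (𝓝 0) := by
      have := ((continuous_abs.rpow_const fun _ => Or.inr hp0.le).tendsto (0 : ℝ))
      rw [abs_zero, Real.zero_rpow hp0.ne'] at this
      exact this.mono_left nhdsWithin_le_nhds
    refine hlim.congr' ?_
    filter_upwards [self_mem_nhdsWithin] with s (hs : s ≠ 0)
    simp [slope_def_field, hs]
  · refine (((hasDerivAt_abs ht).rpow_const (Or.inl (abs_ne_zero.2 ht))).mul
      (hasDerivAt_id t)).congr_deriv ?_
    have h : |t| ^ (p - 1 - 1) * |t| = |t| ^ (p - 1) := by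
      rw [← Real.rpow_add_one (abs_ne_zero.2 ht), sub_add_cancel]
    rw [id_eq, ← h]
    linear_combination (p - 1) * |t| ^ (p - 1 - 1) * sign_mul_self t

lemma abs_rpow_sub_one_mul_self_add_sub_eq {p : ℝ} (hp : 1 < p) (a c : ℝ) :
    |a + c| ^ (p - 1) * (a + c) - |a| ^ (p - 1) * a =
      p * c * ∫ s in (0 : ℝ)..1, |a + s * c| ^ (p - 1) := by
  have hderiv : ∀ s ∈ uIcc (0 : ℝ) 1,
      HasDerivAt (fun u => |a + u * c| ^ (p - 1) * (a + u * c))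
        (p * |a + s * c| ^ (p - 1) * c) s := fun s _ =>
    (hasDerivAt_abs_rpow_sub_one_mul_self hp _).comp s
      (((hasDerivAt_id s).mul_const c).const_add a |>.congr_deriv (one_mul c))
  have hint : IntervalIntegrable (fun s => p * |a + s * c| ^ (p - 1) * c) volume 0 1 := by
    refine Continuous.intervalIntegrable ?_ _ _
    exact (continuous_const.mul ((continuous_const.add (continuous_id.mul continuous_const)).abs
      |>.rpow_const fun _ => Or.inr (by linarith))).mul continuous_const
  rw [← intervalIntegral.integral_const_mul]
  simpa [mul_comm, mul_left_comm, mul_assoc] using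
    (intervalIntegral.integral_eq_sub_of_hasDerivAt hderiv hint).symm

lemma sq_intervalIntegral_le_intervalIntegral_sq {f : ℝ → ℝ}
    (hf : IntervalIntegrable f volume 0 1)
    (hf2 : IntervalIntegrable (fun s => f s ^ 2) volume 0 1) :
    (∫ s in (0 : ℝ)..1, f s) ^ 2 ≤ ∫ s in (0 : ℝ)..1, f s ^ 2 := by
  have h := (even_two.convexOn_pow (𝕜 := ℝ)).map_set_average_le (continuous_pow 2).continuousOn
    isClosed_univ (by simp) (by simp) (.of_forall fun _ => mem_univ _)
    ((intervalIntegrable_iff_integrableOn_Ioc_of_le zero_le_one).1 hf)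
    ((intervalIntegrable_iff_integrableOn_Ioc_of_le zero_le_one).1 hf2)
  simpa [setAverage_eq, intervalIntegral.integral_of_le zero_le_one] using h

lemma rpow_add_le_max_mul_rpow_add_rpow {t x y : ℝ} (ht : 0 ≤ t) (hx : 0 ≤ x) (hy : 0 ≤ y) :
    (x + y) ^ t ≤ max 1 (2 ^ (t - 1)) * (x ^ t + y ^ t) := by
  rcases le_total t 1 with ht1 | ht1
  · exact (Real.rpow_add_le_add_rpow hx hy ht ht1).trans
      (le_mul_of_one_le_left (by positivity) (le_max_left _ _))
  · lift x to ℝ≥0 using hx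
    lift y to ℝ≥0 using hy
    have h : (x + y : ℝ) ^ t ≤ 2 ^ (t - 1) * (x ^ t + y ^ t : ℝ) := by
      exact_mod_cast NNReal.rpow_add_le_mul_rpow_add_rpow x y ht1
    exact h.trans (mul_le_mul_of_nonneg_right (le_max_right _ _) (by positivity))

lemma intervalIntegral_abs_add_mul_rpow_le {t : ℝ} (ht : 0 < t) (a c : ℝ) :
    ∫ s in (0 : ℝ)..1, |a + s * c| ^ t ≤
      max 1 (2 ^ (t - 1)) * (|a| ^ t + |c| ^ t / (t + 1)) := by
  have hpt : ∀ s ∈ Icc (0 : ℝ) 1,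
      |a + s * c| ^ t ≤ max 1 (2 ^ (t - 1)) * (|a| ^ t + s ^ t * |c| ^ t) := fun s hs => calc
    |a + s * c| ^ t ≤ (|a| + s * |c|) ^ t := by
      gcongr
      simpa [abs_mul, abs_of_nonneg hs.1] using abs_add_le a (s * c)
    _ ≤ _ := by
      rw [← Real.mul_rpow hs.1 (abs_nonneg c)]
      exact rpow_add_le_max_mul_rpow_add_rpow ht.le (abs_nonneg a) (by positivity [hs.1])
  have hint : IntervalIntegrable (fun s : ℝ => s ^ t * |c| ^ t) volume 0 1 :=
    ((continuous_id.rpow_const fun _ => Or.inr ht.le).mul continuous_const).intervalIntegrable _ _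
  refine (intervalIntegral.integral_mono_on zero_le_one ?_ ?_ hpt).trans_eq ?_
  · exact ((continuous_const.add (continuous_id.mul continuous_const)).abs.rpow_const
      fun _ => Or.inr ht.le).intervalIntegrable _ _
  · exact (intervalIntegrable_const.add hint).const_mul _
  · rw [intervalIntegral.integral_const_mul,
      intervalIntegral.integral_add intervalIntegrable_const hint,
      intervalIntegral.integral_mul_const, integral_rpow (Or.inl (by linarith))]
    simp [Real.zero_rpow (by linarith : t + 1 ≠ 0), div_eq_inv_mul]

lemma sq_abs_rpow_sub_one_mul_self_add_sub_le {p : ℝ} (hp : 1 < p) (a c : ℝ) :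
    (|a + c| ^ (p - 1) * (a + c) - |a| ^ (p - 1) * a) ^ 2 ≤
      max 1 (2 ^ (2 * (p - 1) - 1)) * p ^ 2 * c ^ 2 *
        (|a| ^ (2 * (p - 1)) + |c| ^ (2 * (p - 1)) / (2 * (p - 1) + 1)) := by
  have hp0 : 0 < p - 1 := by linarith
  have hg : Continuous fun s : ℝ => |a + s * c| ^ (p - 1) :=
    (continuous_const.add (continuous_id.mul continuous_const)).abs.rpow_const
      fun _ => Or.inr hp0.le
  have hg2 :
      (fun s : ℝ => (|a + s * c| ^ (p - 1)) ^ 2) = fun s => |a + s * c| ^ (2 * (p - 1)) := by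
    ext s
    rw [← Real.rpow_mul_natCast (abs_nonneg _), Nat.cast_ofNat, mul_comm (p - 1)]
  calc (|a + c| ^ (p - 1) * (a + c) - |a| ^ (p - 1) * a) ^ 2
      = p ^ 2 * c ^ 2 * (∫ s in (0 : ℝ)..1, |a + s * c| ^ (p - 1)) ^ 2 := by
        rw [abs_rpow_sub_one_mul_self_add_sub_eq hp]; ring
    _ ≤ p ^ 2 * c ^ 2 * ∫ s in (0 : ℝ)..1, |a + s * c| ^ (2 * (p - 1)) := by
        gcongr
        rw [← hg2]
        exact sq_intervalIntegral_le_intervalIntegral_sq (hg.intervalIntegrable _ _)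
          ((hg.pow 2).intervalIntegrable _ _)
    _ ≤ p ^ 2 * c ^ 2 * (max 1 (2 ^ (2 * (p - 1) - 1)) *
          (|a| ^ (2 * (p - 1)) + |c| ^ (2 * (p - 1)) / (2 * (p - 1) + 1))) := by
        gcongr
        exact intervalIntegral_abs_add_mul_rpow_le (by positivity) a c
    _ = _ := by ring

lemma max_one_two_rpow_le_sq (t : ℝ) : max 1 (2 ^ t) ≤ max 1 (2 ^ (t / 2) : ℝ) ^ 2 := by
  have h : (2 : ℝ) ^ t = (2 ^ (t / 2)) ^ 2 := by
    rw [← Real.rpow_mul_natCast zero_le_two]; norm_num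
  rw [h]
  exact max_le (one_le_pow₀ (le_max_left _ _))
    (pow_le_pow_left₀ (by positivity) (le_max_right _ _) 2)

lemma abs_rpow_sub_one_mul_self_add_sub_le {p : ℝ} (hp : 1 < p) (a c : ℝ) :
    |(|a + c| ^ (p - 1) * (a + c) - |a| ^ (p - 1) * a)| ≤
      max 1 (2 ^ ((2 * (p - 1) - 1) / 2)) * p * |c| *
        (|a| ^ (2 * (p - 1)) + |c| ^ (2 * (p - 1)) / (2 * (p - 1) + 1)) ^ (1 / 2 : ℝ) := by
  have hp0 : 0 < p - 1 := by linarith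
  set H := |a| ^ (2 * (p - 1)) + |c| ^ (2 * (p - 1)) / (2 * (p - 1) + 1)
  have hH : 0 ≤ H := by positivity
  refine abs_le_of_sq_le_sq ?_ (by positivity)
  calc _ ≤ max 1 (2 ^ (2 * (p - 1) - 1)) * p ^ 2 * c ^ 2 * H :=
        sq_abs_rpow_sub_one_mul_self_add_sub_le hp a c
    _ ≤ max 1 (2 ^ ((2 * (p - 1) - 1) / 2) : ℝ) ^ 2 * p ^ 2 * c ^ 2 * H := by
        gcongr
        exact max_one_two_rpow_le_sq _
    _ = _ := by
        rw [mul_pow, mul_pow, mul_pow, sq_abs, ← Real.rpow_mul_natCast hH]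
        norm_num

lemma abs_rpow_sub_one_mul_self_add_mul_sub_le {p ε : ℝ} (hp : 1 < p) (hε : 0 ≤ ε)
    (a w : ℝ) :
    |(|a + ε * w| ^ (p - 1) * (a + ε * w) - |a| ^ (p - 1) * a)| ≤
      max 1 (2 ^ ((2 * (p - 1) - 1) / 2)) * p * ε * (|w| *
        (|a| ^ (2 * (p - 1)) + ε ^ (2 * (p - 1)) / (2 * (p - 1) + 1) * |w| ^ (2 * (p - 1)))
          ^ (1 / 2 : ℝ)) := by
  have h := abs_rpow_sub_one_mul_self_add_sub_le hp a (ε * w)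
  rw [abs_mul, abs_of_nonneg hε, Real.mul_rpow hε (abs_nonneg _), mul_div_right_comm] at h
  exact h.trans_eq (by ring)

section
variable {Ω : Type*} [MeasurableSpace Ω] {μ : Measure Ω}

lemma MeasureTheory.AEStronglyMeasurable.abs_rpow {f : Ω → ℝ} (hf : AEStronglyMeasurable f μ)
    {s : ℝ} (hs : 0 ≤ s) : AEStronglyMeasurable (fun x => |f x| ^ s) μ :=
  (continuous_abs.rpow_const fun _ => Or.inr hs).comp_aestronglyMeasurable hf

lemma eLpNorm_abs_rpow (f : Ω → ℝ) {r s : ℝ} (hr : 0 ≤ r) (hs : 0 < s) :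
    eLpNorm (fun x => |f x| ^ s) (ENNReal.ofReal r) μ =
      eLpNorm f (ENNReal.ofReal (r * s)) μ ^ s := by
  simpa only [Real.norm_eq_abs, ← ENNReal.ofReal_mul hr] using
    eLpNorm_norm_rpow (p := ENNReal.ofReal r) (μ := μ) f hs

lemma eLpNorm_abs_rpow_add_const_mul_abs_rpow_le {f g : Ω → ℝ} {r s c : ℝ} (hr : 1 ≤ r)
    (hs : 0 < s) (hc : 0 ≤ c) (hf : AEStronglyMeasurable f μ) (hg : AEStronglyMeasurable g μ) :
    eLpNorm (fun x => |f x| ^ s + c * |g x| ^ s) (ENNReal.ofReal r) μ ≤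
      eLpNorm f (ENNReal.ofReal (r * s)) μ ^ s +
        ENNReal.ofReal c * eLpNorm g (ENNReal.ofReal (r * s)) μ ^ s := by
  calc _ ≤ eLpNorm (fun x => |f x| ^ s) (ENNReal.ofReal r) μ +
        eLpNorm (c • fun x => |g x| ^ s) (ENNReal.ofReal r) μ :=
        eLpNorm_add_le (hf.abs_rpow hs.le) ((hg.abs_rpow hs.le).const_smul c)
          (ENNReal.one_le_ofReal.2 hr)
    _ = _ := by
        rw [eLpNorm_const_smul, Real.enorm_eq_ofReal hc, eLpNorm_abs_rpow f (by linarith) hs,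
          eLpNorm_abs_rpow g (by linarith) hs]

lemma eLpNorm_mul_rpow_half_le {f g : Ω → ℝ} {q r : ℝ} (hq : 0 < q) (hr : 0 < r)
    (hqr : 2 / q + 1 / r = 1) (hf : AEStronglyMeasurable f μ) (hg : AEStronglyMeasurable g μ)
    (hg0 : ∀ x, 0 ≤ g x) :
    eLpNorm (fun x => f x * g x ^ (1 / 2 : ℝ)) 2 μ ≤
      eLpNorm f (ENNReal.ofReal q) μ * eLpNorm g (ENNReal.ofReal r) μ ^ (1 / 2 : ℝ) := by
  have hholder : (ENNReal.ofReal q).HolderTriple (ENNReal.ofReal (2 * r)) 2 := by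
    have h : q.HolderTriple (2 * r) 2 :=
      ⟨by field_simp at hqr ⊢; linarith, hq, by positivity⟩
    have h' := (ENNReal.holderTriple_coe_iff (by simp)).2 h.toNNReal
    rwa [Real.toNNReal_ofNat, ENNReal.coe_ofNat] at h'
  have hsqrt : AEStronglyMeasurable (fun x => g x ^ (1 / 2 : ℝ)) μ :=
    (Real.continuous_rpow_const (by norm_num)).comp_aestronglyMeasurable hg
  calc _ ≤ eLpNorm f (ENNReal.ofReal q) μ *
        eLpNorm (fun x => g x ^ (1 / 2 : ℝ)) (ENNReal.ofReal (2 * r)) μ :=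
        eLpNorm_smul_le_mul_eLpNorm hsqrt hf
    _ = _ := by
        have habs : (fun x => g x ^ (1 / 2 : ℝ)) = fun x => |g x| ^ (1 / 2 : ℝ) := by
          ext x; rw [abs_of_nonneg (hg0 x)]
        rw [habs, eLpNorm_abs_rpow g (by positivity) (by norm_num),
          show 2 * r * (1 / 2) = r by ring]

lemma eLpNorm_mul_rpow_half_abs_rpow_add_le {w f g : Ω → ℝ} {q r s c : ℝ} (hq : 0 < q)
    (hr : 1 ≤ r) (hqr : 2 / q + 1 / r = 1) (hs : 0 < s) (hc : 0 ≤ c)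
    (hw : MemLp w (ENNReal.ofReal q) μ)
    (hf : MemLp f (ENNReal.ofReal (r * s)) μ) (hg : MemLp g (ENNReal.ofReal (r * s)) μ) :
    eLpNorm (fun x => w x * (|f x| ^ s + c * |g x| ^ s) ^ (1 / 2 : ℝ)) 2 μ ≤
      ENNReal.ofReal ((eLpNorm w (ENNReal.ofReal q) μ).toReal *
        ((eLpNorm f (ENNReal.ofReal (r * s)) μ).toReal ^ s +
          c * (eLpNorm g (ENNReal.ofReal (r * s)) μ).toReal ^ s) ^ (1 / 2 : ℝ)) := by
  calc _ ≤ eLpNorm w (ENNReal.ofReal q) μ *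
        eLpNorm (fun x => |f x| ^ s + c * |g x| ^ s) (ENNReal.ofReal r) μ ^ (1 / 2 : ℝ) :=
        eLpNorm_mul_rpow_half_le hq (by linarith) hqr hw.1
          ((hf.1.abs_rpow hs.le).add ((hg.1.abs_rpow hs.le).const_mul c)) fun x => by positivity
    _ ≤ eLpNorm w (ENNReal.ofReal q) μ * (eLpNorm f (ENNReal.ofReal (r * s)) μ ^ s +
          ENNReal.ofReal c * eLpNorm g (ENNReal.ofReal (r * s)) μ ^ s) ^ (1 / 2 : ℝ) := by
        gcongr
        exact eLpNorm_abs_rpow_add_const_mul_abs_rpow_le hr hs hc hf.1 hg.1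
    _ = _ := by
        rw [ENNReal.ofReal_mul ENNReal.toReal_nonneg, ENNReal.ofReal_toReal hw.eLpNorm_ne_top,
          ← ENNReal.ofReal_rpow_of_nonneg (by positivity) (by norm_num),
          ENNReal.ofReal_add (by positivity) (by positivity), ENNReal.ofReal_mul hc,
          ← ENNReal.ofReal_rpow_of_nonneg ENNReal.toReal_nonneg hs.le,
          ← ENNReal.ofReal_rpow_of_nonneg ENNReal.toReal_nonneg hs.le,
          ENNReal.ofReal_toReal hf.eLpNorm_ne_top, ENNReal.ofReal_toReal hg.eLpNorm_ne_top]

end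

theorem stmt_10_general {Ω : Type*} [MeasurableSpace Ω] (μ : Measure Ω)
    (p p' q r : ℝ) (hp1 : 1 < p) (hp2 : p < 2) (hp' : p' = 2 * (p - 1))
    (hr : 1 / (p - 1) ≤ r) (hqr : 2 / q + 1 / r = 1)
    (uhat ω : Ω → ℝ)
    (hωq : MemLp ω (ENNReal.ofReal q) μ)
    (hωrp : MemLp ω (ENNReal.ofReal (r * p')) μ)
    (huhatrp : MemLp uhat (ENNReal.ofReal (r * p')) μ)
    (ε : ℝ) (hε : 0 < ε) :
    eLpNorm (fun x => |uhat x + ε * ω x| ^ (p - 1) * (uhat x + ε * ω x) -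
        |uhat x| ^ (p - 1) * uhat x) 2 μ ≤
      ENNReal.ofReal (max 1 (2 ^ ((p' - 1) / 2)) * p * ε *
        (eLpNorm ω (ENNReal.ofReal q) μ).toReal *
        ((eLpNorm uhat (ENNReal.ofReal (r * p')) μ).toReal ^ p' +
          ε ^ p' / (p' + 1) * (eLpNorm ω (ENNReal.ofReal (r * p')) μ).toReal ^ p')
          ^ ((1:ℝ) / 2)) := by
  subst hp'
  have hp0 : 0 < p - 1 := by linarith
  have hr1 : 1 < r := (one_lt_one_div hp0 (by linarith)).trans_le hr
  have hq : 0 < q := by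
    have : 0 < 2 / q := by linarith [(div_lt_one (by linarith : (0 : ℝ) < r)).2 hr1]
    exact (div_pos_iff_of_pos_left two_pos).1 this
  set K := max 1 (2 ^ ((2 * (p - 1) - 1) / 2) : ℝ) * p * ε
  have hK : 0 ≤ K := by positivity
  calc _ ≤ eLpNorm (K • fun x => ω x * (|uhat x| ^ (2 * (p - 1)) +
        ε ^ (2 * (p - 1)) / (2 * (p - 1) + 1) * |ω x| ^ (2 * (p - 1))) ^ (1 / 2 : ℝ)) 2 μ := by
        refine eLpNorm_mono fun x => ?_
        rw [Pi.smul_apply, smul_eq_mul, Real.norm_eq_abs, Real.norm_eq_abs, abs_mul,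
          abs_of_nonneg hK, abs_mul, abs_of_nonneg (Real.rpow_nonneg (by positivity) _)]
        exact abs_rpow_sub_one_mul_self_add_mul_sub_le hp1 hε.le (uhat x) (ω x)
    _ ≤ _ := by
        rw [eLpNorm_const_smul, Real.enorm_eq_ofReal hK]
        refine (mul_le_mul_right (eLpNorm_mul_rpow_half_abs_rpow_add_le hq hr1.le hqr
          (by positivity) (by positivity) hωq huhatrp hωrp) _).trans_eq ?_
        rw [← ENNReal.ofReal_mul hK, ← mul_assoc]

/-- `L²` estimate for `|û+εω|^{p-1}(û+εω) − |û|^{p-1}û` in terms of `‖ω‖_{L^q}` and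
the `L^{rp'}` norms of `û` and `ω`, where `p' = 2(p−1)`. -/
theorem stmt_10 {Ω : Type*} [MeasurableSpace Ω] (μ : Measure Ω)
    (p p' q r : ℝ) (hp1 : 1 < p) (hp2 : p < 2) (hp' : p' = 2 * (p - 1))
    (hq : 2 ≤ q) (hr : 1 / (p - 1) ≤ r) (hqr : 2 / q + 1 / r = 1)
    (uhat ω : Ω → ℝ) (huhat : Measurable uhat) (hω : Measurable ω)
    (hωq : MemLp ω (ENNReal.ofReal q) μ)
    (hωrp : MemLp ω (ENNReal.ofReal (r * p')) μ)
    (huhatrp : MemLp uhat (ENNReal.ofReal (r * p')) μ)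
    (ε : ℝ) (hε : 0 < ε) :
    eLpNorm (fun x => |uhat x + ε * ω x| ^ (p - 1) * (uhat x + ε * ω x) -
        |uhat x| ^ (p - 1) * uhat x) 2 μ ≤
      ENNReal.ofReal (max 1 (2 ^ ((p' - 1) / 2)) * p * ε *
        (eLpNorm ω (ENNReal.ofReal q) μ).toReal *
        ((eLpNorm uhat (ENNReal.ofReal (r * p')) μ).toReal ^ p' +
          ε ^ p' / (p' + 1) * (eLpNorm ω (ENNReal.ofReal (r * p')) μ).toReal ^ p')
          ^ ((1:ℝ) / 2)) :=
  stmt_10_general μ p p' q r hp1 hp2 hp' hr hqr uhat ω hωq hωrp huhatrp ε hε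
end
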